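/- The number of unordered pairs {m, n} of distinct vectors in N with B(m, n) = 0 is exactly 432; that is, after removing the 24 walls of C from the right-angled 120-cell, the remaining 96 walls meet each other in exactly 432 right-angled faces. -/

import Mathlib

noncomputable section

/-- The Minkowski bilinear form of signature (1,4) on ℝ⁵. -/
def Bform (x y : Fin 5 → ℝ) : ℝ :=
  -(x 0 * y 0) + x 1 * y 1 + x 2 * y 2 + x 3 * y 3 + x 4 * y 4

/-- The golden ratio τ = (1+√5)/2. -/
def gold : ℝ := (1 + Real.sqrt 5) / 2

/-- Item (1): the 8 vectors obtained by permuting the last 4 coordinates of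
(√(2τ), ±2, 0, 0, 0). -/
def item1 : Set (Fin 5 → ℝ) :=
  {v | ∃ (j : Fin 4) (s : ℝ), (s = 1 ∨ s = -1) ∧
    v = Fin.cons (Real.sqrt (2 * gold)) (fun i => if i = j then s * 2 else 0)}

/-- Item (2): the 16 vectors (√(2τ), ±1, ±1, ±1, ±1). -/
def item2 : Set (Fin 5 → ℝ) :=
  {v | ∃ ε : Fin 4 → ℝ, (∀ i, ε i = 1 ∨ ε i = -1) ∧
    v = Fin.cons (Real.sqrt (2 * gold)) ε}

/-- Item (3): the 96 vectors obtained by applying even permutations of the last 4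
coordinates to (√(2τ), ±τ, ±1, ±τ⁻¹, 0), with all 8 sign choices. -/
def item3 : Set (Fin 5 → ℝ) :=
  {v | ∃ σ : Equiv.Perm (Fin 4), Equiv.Perm.sign σ = 1 ∧
    ∃ ε : Fin 3 → ℝ, (∀ i, ε i = 1 ∨ ε i = -1) ∧
      v = Fin.cons (Real.sqrt (2 * gold))
            (fun i => ![ε 0 * gold, ε 1, ε 2 * gold⁻¹, 0] (σ i))}

/-- The 24 normal vectors of items (1) and (2). -/
def Cset : Set (Fin 5 → ℝ) := item1 ∪ item2

/-- The 120 normal vectors of the right-angled hyperbolic 120-cell. -/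
def Vset : Set (Fin 5 → ℝ) := Cset ∪ item3

/-!
Each vector of `N` is `(√(2τ), x)` with `2x ∈ ℤ[√5]⁴`, so `4 B(m, n)` lies in `ℤ[√5]`, where
equality is decidable and `ℤ[√5] → ℝ` is injective because `√5` is irrational. Indexing `N` by
an even permutation and three signs, orthogonality becomes a finite computation: the
orthogonality graph on the 96 indices is 9-regular, so it has `96 · 9 / 2 = 432` edges, and
these are in bijection with the unordered orthogonal pairs of `N`.
-/

open Real goldenRatio SimpleGraph Finset

theorem ncard_setOf_pair_eq_card_edgeFinset {α β : Type*} [Fintype α] (G : SimpleGraph α)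
    [DecidableRel G.Adj] {f : α → β} (hf : Function.Injective f) (r : β → β → Prop)
    (hG : ∀ a b, G.Adj a b ↔ a ≠ b ∧ r (f a) (f b)) :
    {s : Set β | ∃ m ∈ Set.range f, ∃ n ∈ Set.range f, m ≠ n ∧ r m n ∧ s = {m, n}}.ncard =
      #G.edgeFinset := by
  have hset : {s : Set β | ∃ m ∈ Set.range f, ∃ n ∈ Set.range f, m ≠ n ∧ r m n ∧ s = {m, n}} =
      (SetLike.coe ∘ Sym2.map f) '' G.edgeSet := by
    ext s
    constructor
    · rintro ⟨_, ⟨a, rfl⟩, _, ⟨b, rfl⟩, hne, hr, rfl⟩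
      exact ⟨s(a, b), (hG a b).2 ⟨fun h => hne (h ▸ rfl), hr⟩, by simp⟩
    · rintro ⟨e, he, rfl⟩
      induction e using Sym2.ind with
      | h a b =>
        obtain ⟨hne, hr⟩ := (hG a b).1 he
        exact ⟨f a, ⟨a, rfl⟩, f b, ⟨b, rfl⟩, hf.ne hne, hr, by simp⟩
  rw [hset, Set.ncard_image_of_injective _ (SetLike.coe_injective.comp (Sym2.map.injective hf)),
    ← coe_edgeFinset, Set.ncard_coe_finset]

theorem Bform_cons (t s : ℝ) (x y : Fin 4 → ℝ) :
    Bform (Fin.cons t x) (Fin.cons s y) = -(t * s) + ∑ i, x i * y i := by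
  simp only [Bform, Fin.sum_univ_four, add_assoc]
  rfl

abbrev EvenPermSigns := alternatingGroup (Fin 4) × (Fin 3 → ℤˣ)

namespace EvenPermSigns

-- `⟨1, 1⟩ = 1 + √5 = 2τ` and `⟨-1, 1⟩ = √5 - 1 = 2τ⁻¹`.
def doubledCoords (a : EvenPermSigns) (i : Fin 4) : ℤ√5 :=
  ![((a.2 0 : ℤ) : ℤ√5) * ⟨1, 1⟩, ((a.2 1 : ℤ) : ℤ√5) * 2, ((a.2 2 : ℤ) : ℤ√5) * ⟨-1, 1⟩, 0]
    ((a.1 : Equiv.Perm (Fin 4)) i)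

-- The constant term is `-4 · √(2τ)² = -(4 + 4√5)`.
def fourBform (a b : EvenPermSigns) : ℤ√5 :=
  -⟨4, 4⟩ + ∑ i, doubledCoords a i * doubledCoords b i

theorem fourBform_comm (a b : EvenPermSigns) : fourBform a b = fourBform b a := by
  simp only [fourBform, mul_comm]

theorem doubledCoords_injective : Function.Injective doubledCoords := by
  decide

def sqrtFive : {r : ℝ // r * r = (5 : ℤ)} := ⟨√5, by norm_num⟩

theorem lift_sqrtFive_injective : Function.Injective (Zsqrtd.lift sqrtFive) :=
  Zsqrtd.lift_injective _ fun n h => (by decide +kernel : ¬ IsSquare (5 : ℤ)) ⟨n, h⟩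

theorem lift_sqrtFive_twoGold : Zsqrtd.lift sqrtFive ⟨1, 1⟩ / 2 = gold := by
  simp [sqrtFive, gold]

theorem lift_sqrtFive_twoGoldInv : Zsqrtd.lift sqrtFive ⟨-1, 1⟩ / 2 = gold⁻¹ := by
  rw [show gold = φ from rfl, inv_goldenRatio]
  simp only [sqrtFive, Zsqrtd.lift_apply_apply]
  push_cast
  ring

def wallNormal (a : EvenPermSigns) : Fin 5 → ℝ :=
  Fin.cons √(2 * gold) fun i => Zsqrtd.lift sqrtFive (doubledCoords a i) / 2

theorem lift_doubledCoords (a : EvenPermSigns) (i : Fin 4) :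
    Zsqrtd.lift sqrtFive (doubledCoords a i) / 2 =
      ![((a.2 0 : ℤ) : ℝ) * gold, ((a.2 1 : ℤ) : ℝ), ((a.2 2 : ℤ) : ℝ) * gold⁻¹, 0]
        ((a.1 : Equiv.Perm (Fin 4)) i) := by
  simp only [doubledCoords]
  generalize (a.1 : Equiv.Perm (Fin 4)) i = j
  fin_cases j <;>
    simp only [Fin.zero_eta, Fin.mk_one, Fin.reduceFinMk, Matrix.cons_val, map_mul, map_intCast,
      mul_div_assoc, lift_sqrtFive_twoGold, lift_sqrtFive_twoGoldInv, map_ofNat, map_zero, zero_div,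
      div_self (two_ne_zero (α := ℝ)), mul_one]

theorem wallNormal_injective : Function.Injective wallNormal := by
  intro a b h
  have hcoords : doubledCoords a = doubledCoords b := funext fun i => by
    have := congrFun h i.succ
    simp only [wallNormal, Fin.cons_succ] at this
    exact lift_sqrtFive_injective (by linarith)
  exact doubledCoords_injective hcoords

theorem item3_eq_range_wallNormal : item3 = Set.range wallNormal := by
  ext v
  constructor
  · rintro ⟨σ, hσ, ε, hε, rfl⟩
    have hunit (j : Fin 3) : ∃ u : ℤˣ, ((u : ℤ) : ℝ) = ε j :=
      (hε j).elim (fun h => ⟨1, by simp [h]⟩) (fun h => ⟨-1, by simp [h]⟩)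
    choose u hu using hunit
    refine ⟨(⟨σ, Equiv.Perm.mem_alternatingGroup.2 hσ⟩, u), ?_⟩
    simp only [wallNormal, lift_doubledCoords, hu]
  · rintro ⟨⟨⟨σ, hσ⟩, u⟩, rfl⟩
    refine ⟨σ, Equiv.Perm.mem_alternatingGroup.1 hσ, fun j => ((u j : ℤ) : ℝ), fun j => ?_, ?_⟩
    · rcases Int.units_eq_one_or (u j) with h | h <;> simp [h]
    · simp only [wallNormal, lift_doubledCoords]

theorem four_mul_Bform_wallNormal (a b : EvenPermSigns) :
    4 * Bform (wallNormal a) (wallNormal b) = Zsqrtd.lift sqrtFive (fourBform a b) := by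
  have hsq : √(2 * gold) * √(2 * gold) = 2 * gold :=
    Real.mul_self_sqrt (by linarith [show 0 < gold from goldenRatio_pos])
  rw [wallNormal, wallNormal, Bform_cons, hsq, fourBform, map_add, map_sum, mul_add, mul_sum]
  congr 1
  · simp only [sqrtFive, gold, Zsqrtd.lift_apply_apply, Zsqrtd.re_neg, Zsqrtd.im_neg]
    push_cast
    ring
  · refine sum_congr rfl fun i _ => ?_
    rw [map_mul]; ring

theorem Bform_wallNormal_eq_zero_iff (a b : EvenPermSigns) :
    Bform (wallNormal a) (wallNormal b) = 0 ↔ fourBform a b = 0 := by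
  rw [← map_eq_zero_iff _ lift_sqrtFive_injective, ← four_mul_Bform_wallNormal]
  simp

def orthGraph : SimpleGraph EvenPermSigns where
  Adj a b := a ≠ b ∧ fourBform a b = 0
  symm := ⟨fun a b h => ⟨h.1.symm, fourBform_comm a b ▸ h.2⟩⟩
  loopless := ⟨fun _ h => h.1 rfl⟩

instance : DecidableRel orthGraph.Adj := fun a b =>
  inferInstanceAs (Decidable (a ≠ b ∧ fourBform a b = 0))

theorem orthGraph_isRegularOfDegree : orthGraph.IsRegularOfDegree 9 := by
  intro a
  rw [← card_neighborFinset_eq_degree, neighborFinset_eq_filter]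
  revert a
  decide +kernel

theorem card_edgeFinset_orthGraph : #orthGraph.edgeFinset = 432 := by
  have h := orthGraph.sum_degrees_eq_twice_card_edges
  simp only [orthGraph_isRegularOfDegree.degree_eq, sum_const, card_univ, smul_eq_mul] at h
  have hcard : Fintype.card EvenPermSigns = 96 := by decide
  omega

end EvenPermSigns

open EvenPermSigns in
/-- The number of unordered pairs {m, n} of distinct B-orthogonal vectors in the
96-element set N (= item (3)) is exactly 432: the 96 remaining walls of the 120-cell meet
in exactly 432 right-angled faces. -/
theorem stmt10 :
    {s : Set (Fin 5 → ℝ) | ∃ m ∈ item3, ∃ n ∈ item3,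
      m ≠ n ∧ Bform m n = 0 ∧ s = {m, n}}.ncard = 432 := by
  rw [item3_eq_range_wallNormal, ← card_edgeFinset_orthGraph]
  refine ncard_setOf_pair_eq_card_edgeFinset orthGraph wallNormal_injective _ fun a b => ?_
  rw [Bform_wallNormal_eq_zero_iff]
  rfl
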